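/- arXiv:1804.05495 — 4 statements merged into one kernel-verified Lean document; each statement's English description precedes it below -/
import Mathlib

section
/- Dirk Gently's Principle is equivalent to the schema ((φ ∧ ψ) → ϑ) → ((φ → ϑ) ∨ (ψ → ϑ)) for all propositions φ, ψ, ϑ. -/
theorem imp_or_imp_of_and_imp {φ ψ ϑ : Prop} (h : (φ → ψ) ∨ (ψ → φ)) (hϑ : φ ∧ ψ → ϑ) :
    (φ → ϑ) ∨ (ψ → ϑ) :=
  h.imp (fun hφψ hφ => hϑ ⟨hφ, hφψ hφ⟩) (fun hψφ hψ => hϑ ⟨hψφ hψ, hψ⟩)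

theorem imp_or_imp_of_imp_and_or_imp_and {φ ψ : Prop} (h : (φ → φ ∧ ψ) ∨ (ψ → φ ∧ ψ)) :
    (φ → ψ) ∨ (ψ → φ) :=
  h.imp (fun h hφ => (h hφ).2) (fun h hψ => (h hψ).1)

theorem dgp_iff_conj_split :
    (∀ φ ψ : Prop, (φ → ψ) ∨ (ψ → φ)) ↔
      (∀ φ ψ ϑ : Prop, ((φ ∧ ψ) → ϑ) → ((φ → ϑ) ∨ (ψ → ϑ))) :=
  ⟨fun dgp φ ψ _ => imp_or_imp_of_and_imp (dgp φ ψ),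
    fun split φ ψ => imp_or_imp_of_imp_and_or_imp_and (split φ ψ (φ ∧ ψ) id)⟩
end

section
/- Dirk Gently's Principle is equivalent to the distribution schema (φ → ψ ∨ ϑ) → (φ → ψ) ∨ (φ → ϑ) for all propositions φ, ψ, ϑ. -/
theorem imp_or_imp_of_imp_or_of_total {a b c : Prop} (hbc : (b → c) ∨ (c → b))
    (h : a → b ∨ c) : (a → b) ∨ (a → c) :=
  hbc.elim (fun hbc => .inr fun ha => (h ha).elim hbc id)
    (fun hcb => .inl fun ha => (h ha).elim id hcb)

theorem imp_total_of_or_imp_or {a b : Prop} (h : (a ∨ b → a) ∨ (a ∨ b → b)) :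
    (a → b) ∨ (b → a) :=
  h.elim (fun h => .inr fun hb => h (.inr hb)) (fun h => .inl fun ha => h (.inl ha))

theorem dgp_iff_imp_or_distrib :
    (∀ φ ψ : Prop, (φ → ψ) ∨ (ψ → φ)) ↔
      (∀ φ ψ ϑ : Prop, (φ → ψ ∨ ϑ) → ((φ → ψ) ∨ (φ → ϑ))) :=
  ⟨fun dgp _ ψ ϑ => imp_or_imp_of_imp_or_of_total (dgp ψ ϑ),
    fun distrib φ ψ => imp_total_of_or_imp_or (distrib (φ ∨ ψ) φ ψ id)⟩
end

section
/- If every finite subset of a countable graph G is k-colourable for every finite subgraph, and Weak Kőnig's Lemma holds, then G itself is k-colourable (the de Bruijn–Erdős theorem for countable graphs follows from WKL). -/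
/-!
A colouring of `{0, …, n-1}` is encoded as the list of its colours. These lists form a
prefix-closed tree with nodes at every level (by the finite hypothesis), so WKL yields an
infinite path `α`; every edge `u v` lies in some initial segment, on which `α` is proper.
-/

namespace List

variable {β : Type*} (E : ℕ → ℕ → Prop)

def ColorsProperly (l : List β) : Prop :=
  ∀ i j (hi : i < l.length) (hj : j < l.length), E i j → l[i] ≠ l[j]

variable {E}

theorem ColorsProperly.of_prefix {l₁ l₂ : List β} (h : l₂.ColorsProperly E) (hp : l₁ <+: l₂) :
    l₁.ColorsProperly E := by
  intro i j hi hj hE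
  rw [hp.getElem hi, hp.getElem hj]
  exact h i j (hi.trans_le hp.length_le) (hj.trans_le hp.length_le) hE

theorem colorsProperly_ofFn_iff {n : ℕ} (c : ℕ → β) :
    (ofFn fun i : Fin n => c i).ColorsProperly E ↔ ∀ u v, u < n → v < n → E u v → c u ≠ c v := by
  simp only [ColorsProperly, length_ofFn, List.getElem_ofFn]

end List

theorem deBruijn_Erdos_of_WKL_general (k : ℕ) (E : ℕ → ℕ → Prop)
    (WKL : ∀ T : List (Fin k) → Prop,
      (∀ u, T u ∨ ¬ T u) →
      (∀ u w, T (u ++ w) → T u) →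
      (∀ n, ∃ u, T u ∧ u.length = n) →
      ∃ α : ℕ → Fin k, ∀ n, T (List.ofFn fun i : Fin n => α i))
    (hfin : ∀ m, ∃ c : ℕ → Fin k,
      ∀ u v, u < m → v < m → E u v → c u ≠ c v) :
    ∃ c : ℕ → Fin k, ∀ u v, E u v → c u ≠ c v := by
  have prefix_closed (u w : List (Fin k)) (h : (u ++ w).ColorsProperly E) : u.ColorsProperly E :=
    h.of_prefix (List.prefix_append u w)
  have node_at_level (n : ℕ) : ∃ u : List (Fin k), u.ColorsProperly E ∧ u.length = n := by
    obtain ⟨c, hc⟩ := hfin n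
    exact ⟨List.ofFn fun i : Fin n => c i, (List.colorsProperly_ofFn_iff c).2 hc, List.length_ofFn⟩
  obtain ⟨α, hα⟩ := WKL _ (fun u => Classical.em _) prefix_closed node_at_level
  refine ⟨α, fun u v hE => ?_⟩
  exact (List.colorsProperly_ofFn_iff α).1 (hα (max u v + 1)) u v
    (Nat.lt_succ_of_le (le_max_left u v)) (Nat.lt_succ_of_le (le_max_right u v)) hE

theorem deBruijn_Erdos_of_WKL (k : ℕ) (E : ℕ → ℕ → Prop)
    (hsymm : ∀ u v, E u v → E v u) (hirr : ∀ u, ¬ E u u)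
    (hdec : ∀ u v, E u v ∨ ¬ E u v)
    (WKL : ∀ T : List (Fin k) → Prop,
      (∀ u, T u ∨ ¬ T u) →
      (∀ u w, T (u ++ w) → T u) →
      (∀ n, ∃ u, T u ∧ u.length = n) →
      ∃ α : ℕ → Fin k, ∀ n, T (List.ofFn fun i : Fin n => α i))
    (hfin : ∀ m, ∃ c : ℕ → Fin k,
      ∀ u v, u < m → v < m → E u v → c u ≠ c v) :
    ∃ c : ℕ → Fin k, ∀ u v, E u v → c u ≠ c v :=
  deBruijn_Erdos_of_WKL_general k E WKL hfin
end

section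
/- WKL is equivalent to compactness of propositional logic for countable sets of formulas: every decidable infinite binary tree has an infinite path if and only if every countable set Γ of propositional formulas, all of whose finite subsets are satisfiable, is satisfiable. -/
/-- Propositional formulas over countably many proposition symbols `A₀, A₁, …`
(with `A₀` playing the role of `⊥`, enforced by requiring assignments to send
symbol `0` to `false`). -/
inductive PropForm : Type
  | var : ℕ → PropForm
  | not : PropForm → PropForm
  | and : PropForm → PropForm → PropForm
  | or : PropForm → PropForm → PropForm
  | imp : PropForm → PropForm → PropForm

/-- Evaluation of a propositional formula under a truth assignment. -/
def PropForm.eval (B : ℕ → Bool) : PropForm → Bool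
  | PropForm.var n => B n
  | PropForm.not φ => !(φ.eval B)
  | PropForm.and φ ψ => φ.eval B && ψ.eval B
  | PropForm.or φ ψ => φ.eval B || ψ.eval B
  | PropForm.imp φ ψ => !(φ.eval B) || ψ.eval B

/-!
For WKL ⇒ compactness, the finite partial assignments that extend to a model of the first `n`
formulas, `n` their length, form an infinite tree; a path through it is a model of every formula,
since a formula only mentions the finitely many symbols below its largest index.

For compactness ⇒ WKL, the `n`-th formula is the disjunction, over the nodes `u` of length `n`,
of the conjunction of literals saying that `A₁ … Aₙ` spell `u`. Any initial segment of the
formulas is satisfied by spelling out a long enough node, and a model `B` of all of them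
yields the path `i ↦ B (i + 1)`.
-/

namespace PropForm

def maxVar : PropForm → ℕ
  | var n => n
  | not φ => φ.maxVar
  | and φ ψ | or φ ψ | imp φ ψ => max φ.maxVar ψ.maxVar

theorem eval_congr {φ : PropForm} {B B' : ℕ → Bool} (h : ∀ n ≤ φ.maxVar, B n = B' n) :
    φ.eval B = φ.eval B' := by
  induction φ with
  | var n => exact h n le_rfl
  | not φ ih => simp only [eval, ih h]
  | and φ ψ ihφ ihψ | or φ ψ ihφ ihψ | imp φ ψ ihφ ihψ =>
    simp only [maxVar, le_max_iff] at h
    simp only [eval, ihφ fun n hn => h n (.inl hn), ihψ fun n hn => h n (.inr hn)]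

def bot : PropForm := var 0

def top : PropForm := imp bot bot

def lit (k : ℕ) (b : Bool) : PropForm := if b then var k else not (var k)

def bigAnd (l : List PropForm) : PropForm := l.foldr and top

def bigOr (l : List PropForm) : PropForm := l.foldr or bot

variable {B : ℕ → Bool}

@[simp]
theorem eval_top : top.eval B = true := by
  simp [top, eval]

@[simp]
theorem eval_lit {k : ℕ} {b : Bool} : (lit k b).eval B = true ↔ B k = b := by
  cases b <;> simp [lit, eval]

theorem eval_bigAnd {l : List PropForm} : (bigAnd l).eval B = true ↔ ∀ φ ∈ l, φ.eval B = true := by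
  induction l with
  | nil => simp [bigAnd]
  | cons φ l ih => simp [bigAnd, eval, ← ih]

theorem eval_bigOr (hB : B 0 = false) {l : List PropForm} :
    (bigOr l).eval B = true ↔ ∃ φ ∈ l, φ.eval B = true := by
  induction l with
  | nil => simp [bigOr, bot, eval, hB]
  | cons φ l ih => simp [bigOr, eval, ← ih]

end PropForm

open PropForm

section WeakKoenigToCompactness

variable (γ : ℕ → PropForm)

/-- Entry `i` of `u` is read as the value of `Aᵢ`. -/
def ExtendsToModel (u : List Bool) : Prop :=
  ∃ B : ℕ → Bool, B 0 = false ∧ (∀ i (hi : i < u.length), B i = u[i]) ∧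
    ∀ i < u.length, (γ i).eval B = true

variable {γ}

theorem ExtendsToModel.of_append {u w : List Bool} (h : ExtendsToModel γ (u ++ w)) :
    ExtendsToModel γ u := by
  obtain ⟨B, hB0, hBu, hBγ⟩ := h
  have hlen := (List.prefix_append u w).length_le
  refine ⟨B, hB0, fun i hi => ?_, fun i hi => hBγ i (hi.trans_le hlen)⟩
  rw [hBu i (hi.trans_le hlen), List.getElem_append_left hi]

theorem extendsToModel_ofFn_iff {α : ℕ → Bool} {n : ℕ} :
    ExtendsToModel γ (List.ofFn fun i : Fin n => α i) ↔
      ∃ B : ℕ → Bool, B 0 = false ∧ (∀ i < n, B i = α i) ∧ ∀ i < n, (γ i).eval B = true := by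
  simp [ExtendsToModel]

theorem exists_extendsToModel_length
    (hsat : ∀ m, ∃ B : ℕ → Bool, B 0 = false ∧ ∀ i ≤ m, (γ i).eval B = true) (n : ℕ) :
    ∃ u, ExtendsToModel γ u ∧ u.length = n := by
  obtain ⟨B, hB0, hBγ⟩ := hsat n
  exact ⟨_, extendsToModel_ofFn_iff.2 ⟨B, hB0, fun _ _ => rfl, fun i hi => hBγ i hi.le⟩,
    List.length_ofFn⟩

theorem eval_of_forall_extendsToModel {α : ℕ → Bool}
    (hα : ∀ n, ExtendsToModel γ (List.ofFn fun i : Fin n => α i)) :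
    α 0 = false ∧ ∀ n, (γ n).eval α = true := by
  refine ⟨?_, fun n => ?_⟩
  · obtain ⟨B, hB0, hBα, -⟩ := extendsToModel_ofFn_iff.1 (hα 1)
    rw [← hBα 0 one_pos, hB0]
  · obtain ⟨B, -, hBα, hBγ⟩ := extendsToModel_ofFn_iff.1 (hα (max (n + 1) ((γ n).maxVar + 1)))
    rw [← hBγ n (by omega)]
    exact eval_congr fun k hk => (hBα k (by omega)).symm

end WeakKoenigToCompactness

section CompactnessToWeakKoenig

/-- Entry `i` of `f` is read as the value of `A_{i+1}`, since `A₀` is `⊥`. -/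
def cube {n : ℕ} (f : Fin n → Bool) : PropForm :=
  bigAnd ((List.finRange n).map fun i => lit (i.val + 1) (f i))

theorem eval_cube {B : ℕ → Bool} {n : ℕ} {f : Fin n → Bool} :
    (cube f).eval B = true ↔ (fun i : Fin n => B (i + 1)) = f := by
  simp [cube, eval_bigAnd, funext_iff]

variable (T : List Bool → Prop) [DecidablePred T]

noncomputable def levelForm (n : ℕ) : PropForm :=
  bigOr (((Finset.univ : Finset (Fin n → Bool)).filter fun f => T (List.ofFn f)).toList.map cube)

variable {T}

theorem eval_levelForm {B : ℕ → Bool} (hB : B 0 = false) {n : ℕ} :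
    (levelForm T n).eval B = true ↔ T (List.ofFn fun i : Fin n => B (i + 1)) := by
  simp [levelForm, eval_bigOr hB, eval_cube]

theorem exists_eval_levelForm_le (hprefix : ∀ u w, T (u ++ w) → T u) {u : List Bool} (hu : T u) :
    ∃ B : ℕ → Bool, B 0 = false ∧ ∀ i ≤ u.length, (levelForm T i).eval B = true := by
  refine ⟨fun k => (false :: u).getD k false, rfl, fun i hi => ?_⟩
  rw [eval_levelForm rfl]
  have htake : (List.ofFn fun j : Fin i => (false :: u).getD (j + 1) false) = u.take i := by
    apply List.ext_getElem (by simp only [List.length_ofFn, List.length_take]; omega)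
    intro j _ hj
    have hju : j < u.length := by simp only [List.length_take] at hj; omega
    simp [hju]
  rw [htake]
  exact hprefix _ _ ((List.take_append_drop i u).symm ▸ hu)

end CompactnessToWeakKoenig

theorem wkl_iff_propositional_compactness :
    (∀ T : List Bool → Prop,
      (∀ u, T u ∨ ¬ T u) →
      (∀ u w, T (u ++ w) → T u) →
      (∀ n, ∃ u, T u ∧ u.length = n) →
      ∃ α : ℕ → Bool, ∀ n, T (List.ofFn fun i : Fin n => α i)) ↔
    (∀ γ : ℕ → PropForm,
      (∀ m, ∃ B : ℕ → Bool, B 0 = false ∧ ∀ i ≤ m, (γ i).eval B = true) →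
      ∃ B : ℕ → Bool, B 0 = false ∧ ∀ n, (γ n).eval B = true) := by
  constructor
  · intro wkl γ hsat
    obtain ⟨α, hα⟩ := wkl (ExtendsToModel γ) (fun _ => em _) (fun _ _ => ExtendsToModel.of_append)
      (exists_extendsToModel_length hsat)
    exact ⟨α, eval_of_forall_extendsToModel hα⟩
  · intro compact T _ hprefix hinf
    classical
    have hsat (m : ℕ) : ∃ B : ℕ → Bool, B 0 = false ∧ ∀ i ≤ m, (levelForm T i).eval B = true := by
      obtain ⟨u, hu, rfl⟩ := hinf m
      exact exists_eval_levelForm_le hprefix hu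
    obtain ⟨B, hB0, hB⟩ := compact (levelForm T) hsat
    exact ⟨fun i => B (i + 1), fun n => (eval_levelForm hB0).1 (hB n)⟩
end
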